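/- Let F₃ := (id⊗S_B⁻¹)(E) ∈ B⊗B, viewed in A⊗A. Then F₃·(x⊗1) = (1⊗x)·F₃ for all x ∈ B (so the map a⊗b ↦ (1⊗b)F₃(a⊗1) satisfies (1⊗b)F₃(xa⊗1) = (1⊗bx)F₃(a⊗1) and descends to the balanced quotient A⊗^sA := (A⊗A)/J^s), and for all a, b ∈ A the element (1⊗b)F₃(a⊗1) − a⊗b lies in J^s := span_ℂ{xa'⊗b' − a'⊗b'x : x ∈ B, a', b' ∈ A}. -/

import Mathlib

open scoped TensorProduct

set_option synthInstance.maxHeartbeats 1000000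
set_option maxHeartbeats 1000000

/-- The canonical inclusion `B ⊗ C → A ⊗ A` for subalgebras `B, C ⊆ A`. -/
noncomputable def incl {A : Type*} [Ring A] [Algebra ℂ A] (B C : Subalgebra ℂ A) :
    (↥B ⊗[ℂ] ↥C) →ₗ[ℂ] (A ⊗[ℂ] A) :=
  TensorProduct.map B.val.toLinearMap C.val.toLinearMap

/-- The linear map `μ_{S_B} : B ⊗ C → C`, `b ⊗ c ↦ S_B(b)·c`. -/
noncomputable def muSB {A : Type*} [Ring A] [Algebra ℂ A] {B C : Subalgebra ℂ A}
    (SB : ↥B ≃ₗ[ℂ] ↥C) : (↥B ⊗[ℂ] ↥C) →ₗ[ℂ] ↥C :=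
  TensorProduct.lift (LinearMap.mul ℂ ↥C) ∘ₗ TensorProduct.map SB.toLinearMap LinearMap.id

/-- The linear map `μ_{S_C} : B ⊗ C → B`, `b ⊗ c ↦ b·S_C(c)`. -/
noncomputable def muSC {A : Type*} [Ring A] [Algebra ℂ A] {B C : Subalgebra ℂ A}
    (SC : ↥C ≃ₗ[ℂ] ↥B) : (↥B ⊗[ℂ] ↥C) →ₗ[ℂ] ↥B :=
  TensorProduct.lift (LinearMap.mul ℂ ↥B) ∘ₗ TensorProduct.map LinearMap.id SC.toLinearMap

/-- `F₃ := (id⊗S_B⁻¹)(E) ∈ B⊗B` viewed in `A⊗A`. -/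
noncomputable def F3 {A : Type*} [Ring A] [Algebra ℂ A] {B C : Subalgebra ℂ A}
    (SB : ↥B ≃ₗ[ℂ] ↥C) (E : ↥B ⊗[ℂ] ↥C) : A ⊗[ℂ] A :=
  incl B B (TensorProduct.map LinearMap.id SB.symm.toLinearMap E)

/-!
Since `S_B⁻¹` is anti-multiplicative, `id ⊗ S_B⁻¹` turns right multiplication by `1 ⊗ S_B x`
into left multiplication by `1 ⊗ x`; applied to `E (x ⊗ 1) = E (1 ⊗ S_B x)` this gives
`F₃ (x ⊗ 1) = (1 ⊗ x) F₃`. For the second claim, modulo `Jˢ` every simple tensor `e ⊗ f ∈ B ⊗ B`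
satisfies `(1 ⊗ b)(e ⊗ f)(a ⊗ 1) = e a ⊗ b f ≡ a ⊗ b f e`, so `(1 ⊗ b) F₃ (a ⊗ 1) ≡ a ⊗ b m(F₃)`
with `m(e ⊗ f) = f e`; and `m(F₃) = S_B⁻¹(μ_{S_B}(E)) = 1`.
-/

theorem LinearEquiv.symm_mul_of_anti {K R S : Type*} [Semiring K] [Semiring R] [Semiring S]
    [Module K R] [Module K S] (e : R ≃ₗ[K] S) (he : ∀ x y, e (x * y) = e y * e x) (a b : S) :
    e.symm (a * b) = e.symm b * e.symm a :=
  e.injective <| by rw [he, e.apply_symm_apply, e.apply_symm_apply, e.apply_symm_apply]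

section TensorProductMul

variable {K R S S' : Type*} [CommSemiring K] [Semiring R] [Semiring S] [Semiring S']
  [Algebra K R] [Algebra K S] [Algebra K S']

theorem LinearMap.lTensor_mul_tmul_one (f : S →ₗ[K] S') (t : R ⊗[K] S) (x : R) :
    f.lTensor R (t * (x ⊗ₜ 1)) = f.lTensor R t * (x ⊗ₜ 1) := by
  induction t using TensorProduct.induction_on with
  | zero => simp
  | tmul r s => simp [Algebra.TensorProduct.tmul_mul_tmul]
  | add t t' ht ht' => simp only [add_mul, map_add, ht, ht']

theorem LinearMap.lTensor_mul_one_tmul_of_anti (g : S →ₗ[K] S')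
    (hg : ∀ s s', g (s * s') = g s' * g s) (t : R ⊗[K] S) (s : S) :
    g.lTensor R (t * (1 ⊗ₜ s)) = (1 ⊗ₜ g s) * g.lTensor R t := by
  induction t using TensorProduct.induction_on with
  | zero => simp
  | tmul r s' => simp [Algebra.TensorProduct.tmul_mul_tmul, hg]
  | add t t' ht ht' => simp only [add_mul, mul_add, map_add, ht, ht']

end TensorProductMul

/-- The balancing subspace `Jˢ`. -/
def balancingSubmodule {K A : Type*} [CommRing K] [Ring A] [Algebra K A] (B : Subalgebra K A) :
    Submodule K (A ⊗[K] A) :=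
  Submodule.span K {z | ∃ (x : B) (a b : A), z = ((x : A) * a) ⊗ₜ[K] b - a ⊗ₜ[K] (b * (x : A))}

section Inclusion

variable {A : Type*} [Ring A] [Algebra ℂ A]

theorem incl_tmul (B C : Subalgebra ℂ A) (b : B) (c : C) :
    incl B C (b ⊗ₜ c) = (b : A) ⊗ₜ (c : A) :=
  rfl

theorem incl_mul (B C : Subalgebra ℂ A) (s t : B ⊗[ℂ] C) :
    incl B C (s * t) = incl B C s * incl B C t := by
  have hincl : incl B C = (Algebra.TensorProduct.map B.val C.val).toLinearMap :=
    TensorProduct.ext' fun _ _ => rfl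
  simp only [hincl, AlgHom.toLinearMap_apply, map_mul]

theorem one_tmul_mul_incl_mul_tmul_one_sub_mem (B : Subalgebra ℂ A) (t : B ⊗[ℂ] B) (a b : A) :
    ((1 : A) ⊗ₜ b) * incl B B t * (a ⊗ₜ 1) -
        a ⊗ₜ (b * (LinearMap.mul' ℂ B (TensorProduct.comm ℂ B B t) : A)) ∈
      balancingSubmodule B := by
  induction t using TensorProduct.induction_on with
  | zero => simp
  | tmul x y =>
    refine Submodule.subset_span ⟨x, a, b * y, ?_⟩
    simp [incl_tmul, Algebra.TensorProduct.tmul_mul_tmul, mul_assoc]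
  | add s t hs ht =>
    convert Submodule.add_mem _ hs ht using 1
    simp only [map_add, mul_add, add_mul, Subalgebra.coe_add, TensorProduct.tmul_add]
    abel

variable {B C : Subalgebra ℂ A} (SB : B ≃ₗ[ℂ] C) (hSBmul : ∀ x x' : B, SB (x * x') = SB x' * SB x)

theorem F3_eq_incl_lTensor (E : B ⊗[ℂ] C) :
    F3 SB E = incl B B (SB.symm.toLinearMap.lTensor B E) :=
  rfl

include hSBmul

theorem mul'_comm_lTensor_symm (t : B ⊗[ℂ] C) :
    LinearMap.mul' ℂ B (TensorProduct.comm ℂ B B (SB.symm.toLinearMap.lTensor B t)) =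
      SB.symm (muSB SB t) := by
  induction t using TensorProduct.induction_on with
  | zero => simp
  | tmul x y =>
    simp [muSB, SB.symm_mul_of_anti hSBmul]
  | add s t hs ht => simp only [map_add, hs, ht]

theorem F3_mul_tmul_one {E : B ⊗[ℂ] C}
    (hE1 : ∀ x : B, E * (x ⊗ₜ[ℂ] (1 : C)) = E * ((1 : B) ⊗ₜ[ℂ] SB x)) (x : B) :
    F3 SB E * ((x : A) ⊗ₜ[ℂ] (1 : A)) = ((1 : A) ⊗ₜ[ℂ] (x : A)) * F3 SB E := by
  calc F3 SB E * ((x : A) ⊗ₜ[ℂ] (1 : A))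
      = incl B B (SB.symm.toLinearMap.lTensor B (E * (x ⊗ₜ 1))) := by
        rw [LinearMap.lTensor_mul_tmul_one, incl_mul, F3_eq_incl_lTensor, incl_tmul,
          Subalgebra.coe_one]
    _ = incl B B (SB.symm.toLinearMap.lTensor B (E * (1 ⊗ₜ SB x))) := by rw [hE1]
    _ = ((1 : A) ⊗ₜ[ℂ] (x : A)) * F3 SB E := by
        rw [LinearMap.lTensor_mul_one_tmul_of_anti _ (SB.symm_mul_of_anti hSBmul), incl_mul,
          F3_eq_incl_lTensor, LinearEquiv.coe_coe, LinearEquiv.symm_apply_apply, incl_tmul,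
          Subalgebra.coe_one]

end Inclusion

theorem stmt14_general {A : Type*} [Ring A] [Algebra ℂ A] (B C : Subalgebra ℂ A)
    (SB : ↥B ≃ₗ[ℂ] ↥C) (hSBmul : ∀ x x' : ↥B, SB (x * x') = SB x' * SB x)
    (hSBone : SB 1 = 1)
    (E : ↥B ⊗[ℂ] ↥C)
    (hE1 : ∀ x : ↥B, E * (x ⊗ₜ[ℂ] (1 : ↥C)) = E * ((1 : ↥B) ⊗ₜ[ℂ] SB x))
    (hn1 : muSB SB E = 1) :
    (∀ x : ↥B,
      F3 SB E * ((x : A) ⊗ₜ[ℂ] (1 : A)) = ((1 : A) ⊗ₜ[ℂ] (x : A)) * F3 SB E) ∧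
    (∀ a b : A,
      ((1 : A) ⊗ₜ[ℂ] b) * F3 SB E * (a ⊗ₜ[ℂ] (1 : A)) - a ⊗ₜ[ℂ] b ∈
        Submodule.span ℂ {z : A ⊗[ℂ] A |
          ∃ (x : ↥B) (a' b' : A),
            z = ((x : A) * a') ⊗ₜ[ℂ] b' - a' ⊗ₜ[ℂ] (b' * (x : A))}) := by
  refine ⟨F3_mul_tmul_one SB hSBmul hE1, fun a b => ?_⟩
  have hunit :
      LinearMap.mul' ℂ B (TensorProduct.comm ℂ B B (SB.symm.toLinearMap.lTensor B E)) = 1 := by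
    rw [mul'_comm_lTensor_symm SB hSBmul, hn1, SB.symm_apply_eq, hSBone]
  have key := one_tmul_mul_incl_mul_tmul_one_sub_mem B (SB.symm.toLinearMap.lTensor B E) a b
  rwa [hunit, Subalgebra.coe_one, mul_one, ← F3_eq_incl_lTensor] at key

/-- `F₃·(x⊗1) = (1⊗x)·F₃` for all `x ∈ B`, and for all `a, b ∈ A` the element
`(1⊗b)F₃(a⊗1) − a⊗b` lies in the balancing subspace `Jˢ`. -/
theorem stmt14 {A : Type*} [Ring A] [Algebra ℂ A] (B C : Subalgebra ℂ A)
    (hcomm : ∀ (x : ↥B) (y : ↥C), (x : A) * (y : A) = (y : A) * (x : A))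
    (SB : ↥B ≃ₗ[ℂ] ↥C) (hSBmul : ∀ x x' : ↥B, SB (x * x') = SB x' * SB x)
    (hSBone : SB 1 = 1)
    (SC : ↥C ≃ₗ[ℂ] ↥B) (hSCmul : ∀ y y' : ↥C, SC (y * y') = SC y' * SC y)
    (hSCone : SC 1 = 1)
    (E : ↥B ⊗[ℂ] ↥C) (hEidem : E * E = E)
    (hE1 : ∀ x : ↥B, E * (x ⊗ₜ[ℂ] (1 : ↥C)) = E * ((1 : ↥B) ⊗ₜ[ℂ] SB x))
    (hE2 : ∀ y : ↥C, ((1 : ↥B) ⊗ₜ[ℂ] y) * E = (SC y ⊗ₜ[ℂ] (1 : ↥C)) * E)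
    (hn1 : muSB SB E = 1) (hn2 : muSC SC E = 1) :
    (∀ x : ↥B,
      F3 SB E * ((x : A) ⊗ₜ[ℂ] (1 : A)) = ((1 : A) ⊗ₜ[ℂ] (x : A)) * F3 SB E) ∧
    (∀ a b : A,
      ((1 : A) ⊗ₜ[ℂ] b) * F3 SB E * (a ⊗ₜ[ℂ] (1 : A)) - a ⊗ₜ[ℂ] b ∈
        Submodule.span ℂ {z : A ⊗[ℂ] A |
          ∃ (x : ↥B) (a' b' : A),
            z = ((x : A) * a') ⊗ₜ[ℂ] b' - a' ⊗ₜ[ℂ] (b' * (x : A))}) :=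
  stmt14_general B C SB hSBmul hSBone E hE1 hn1
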